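/- arXiv:2007.06332 — 2 statements merged into one kernel-verified Lean document; each statement's English description precedes it below -/
import Mathlib

section
/- Let k_p, k_d be real constants, let c : ℝ → ℝ be a function, let z, z_d : ℝ → ℝ³ be curves, and let y : ℝ → ℝ³ be a twice differentiable curve with ‖y(t)‖ = 1 and ⟨y(t), ẏ(t)⟩ = 0 for all t satisfying the perturbed pendulum equation ÿ + ‖ẏ‖²·y = −k_p·(y × (y × e₃)) − k_d·ẏ + c(t)·(y × (y × (z(t) − z_d(t)))). Then the Lyapunov function V₁(t) = k_p·(1 − ⟨y(t), e₃⟩) + (1/2)·‖ẏ(t)‖² satisfies dV₁/dt = −k_d·‖ẏ(t)‖² + c(t)·⟨y × (y × (z − z_d)), ẏ⟩ for all t. -/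
open scoped InnerProductSpace

noncomputable section

/-- ℝ³ with the Euclidean inner product and norm. -/
abbrev E3 := EuclideanSpace ℝ (Fin 3)

/-- The cross product on ℝ³. -/
def cross (a b : E3) : E3 :=
  WithLp.toLp 2 ![a 1 * b 2 - a 2 * b 1, a 2 * b 0 - a 0 * b 2, a 0 * b 1 - a 1 * b 0]

/-- The third standard basis vector e₃ = (0,0,1). -/
def e3 : E3 := WithLp.toLp 2 ![0, 0, 1]

/-! The energy `k (1 - ⟨y, e⟩) + ½‖ẏ‖²` has derivative `⟨ẏ, ÿ - k e⟩`. Along the perturbed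
pendulum equation, the centripetal term `‖ẏ‖² y` does no work because `ẏ ⟂ y`, and for the
same reason, by the expansion `y × (y × e₃) = ⟨y, e₃⟩ y - ‖y‖² e₃`, the gravity term
contributes exactly `k_p ⟨e₃, ẏ⟩`, which cancels the potential part. -/

theorem cross_eq_toLp_crossProduct (a b : E3) :
    cross a b = WithLp.toLp 2 (crossProduct (WithLp.ofLp a) (WithLp.ofLp b)) := rfl

theorem cross_cross_self (a b : E3) : cross a (cross a b) = ⟪a, b⟫_ℝ • a - ⟪a, a⟫_ℝ • b := by
  rw [cross_eq_toLp_crossProduct, cross_eq_toLp_crossProduct, WithLp.ofLp_toLp,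
    cross_cross_eq_smul_sub_smul', ← real_inner_comm a b]
  rfl

theorem inner_cross_cross_self_of_inner_eq_zero {a v : E3} (hav : ⟪a, v⟫_ℝ = 0) (b : E3) :
    ⟪cross a (cross a b), v⟫_ℝ = -(⟪a, a⟫_ℝ * ⟪b, v⟫_ℝ) := by
  rw [cross_cross_self, inner_sub_left, real_inner_smul_left, real_inner_smul_left, hav]
  ring

theorem hasDerivAt_potential_add_kinetic {F : Type*} [NormedAddCommGroup F]
    [InnerProductSpace ℝ F] {x v : ℝ → F} {a : F} {t : ℝ} (hx : HasDerivAt x (v t) t)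
    (hv : HasDerivAt v a t) (k : ℝ) (e : F) :
    HasDerivAt (fun s => k * (1 - ⟪x s, e⟫_ℝ) + (1 / 2) * ‖v s‖ ^ 2)
      (-(k * ⟪v t, e⟫_ℝ) + ⟪v t, a⟫_ℝ) t := by
  have hpot : HasDerivAt (fun s => ⟪x s, e⟫_ℝ) ⟪v t, e⟫_ℝ t := by
    simpa using hx.inner ℝ (hasDerivAt_const t e)
  exact (((hpot.const_sub 1).const_mul k).add (hv.norm_sq.const_mul (1 / 2))).congr_deriv
    (by ring)

/-- For a twice differentiable curve y on the unit 2-sphere solving the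
perturbed pendulum equation
`ÿ + ‖ẏ‖²y = −k_p (y × (y × e₃)) − k_d ẏ + c(t) (y × (y × (z − z_d)))`,
the Lyapunov function `V₁ = k_p (1 − ⟨y, e₃⟩) + ½‖ẏ‖²` satisfies
`V̇₁ = −k_d‖ẏ‖² + c(t) ⟨y × (y × (z − z_d)), ẏ⟩`. -/
theorem lyapunov_derivative_perturbed_pendulum
    (kp kd : ℝ) (c : ℝ → ℝ) (z zd : ℝ → E3)
    (y : ℝ → E3)
    (hy : Differentiable ℝ y) (hy' : Differentiable ℝ (deriv y))
    (hsph : ∀ t, ‖y t‖ = 1)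
    (horth : ∀ t, ⟪y t, deriv y t⟫_ℝ = 0)
    (heqn : ∀ t, deriv (deriv y) t + ‖deriv y t‖ ^ 2 • y t =
      -(kp • cross (y t) (cross (y t) e3)) - kd • deriv y t +
        c t • cross (y t) (cross (y t) (z t - zd t))) :
    ∀ t, HasDerivAt (fun s => kp * (1 - ⟪y s, e3⟫_ℝ) + (1 / 2) * ‖deriv y s‖ ^ 2)
        (-(kd * ‖deriv y t‖ ^ 2) +
          c t * ⟪cross (y t) (cross (y t) (z t - zd t)), deriv y t⟫_ℝ) t := by
  intro t
  have hunit : ⟪y t, y t⟫_ℝ = 1 := by rw [real_inner_self_eq_norm_sq, hsph t, one_pow]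
  have hpower : ⟪deriv (deriv y) t, deriv y t⟫_ℝ = kp * ⟪e3, deriv y t⟫_ℝ -
      kd * ‖deriv y t‖ ^ 2 + c t * ⟪cross (y t) (cross (y t) (z t - zd t)), deriv y t⟫_ℝ := by
    have hwork := congrArg (⟪·, deriv y t⟫_ℝ) (heqn t)
    simp only [inner_add_left, inner_sub_left, inner_neg_left, real_inner_smul_left,
      horth t, inner_cross_cross_self_of_inner_eq_zero (horth t) e3, hunit,
      real_inner_self_eq_norm_sq] at hwork
    linarith
  convert hasDerivAt_potential_add_kinetic (hy t).hasDerivAt (hy' t).hasDerivAt kp e3 using 1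
  rw [real_inner_comm (deriv (deriv y) t), hpower, real_inner_comm e3]
  ring
end
end

section
/- Let k₁, k₂ be real constants, let β : ℝ → ℝ³ be a function, and let z, z_d : ℝ → ℝ³ be twice differentiable curves satisfying ‖z(t)‖ = ‖z_d(t)‖ = 1, ⟨z(t), ż(t)⟩ = 0, and ⟨z_d(t), ż_d(t)⟩ = 0 for all t. Define v_e := ż − (z_d × ż_d) × z and FF := ⟨z, z_d × ż_d⟩·(z × ż) + (z_d × z̈_d) × z. If z solves z̈ = −‖ż‖²·z − k₁·(z × (z × z_d)) − k₂·v_e + FF − z × (z × β(t)), then the tracking Lyapunov function V₂(t) = k₁·(1 − ⟨z(t), z_d(t)⟩) + (1/2)·‖v_e(t)‖² satisfies dV₂/dt = −k₂·‖v_e(t)‖² − ⟨z × (z × β(t)), v_e(t)⟩ for all t. -/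
/-!
Differentiating, `V̇₂ = -k₁ (⟨ż, z_d⟩ + ⟨z, ż_d⟩) + ⟨v̇_e, v_e⟩`, and along the closed loop
`v̇_e = -‖ż‖² z - k₁ z × (z × z_d) - k₂ v_e + (⟨z, w⟩ (z × ż) - w × ż) - z × (z × β)` with
`w = z_d × ż_d` (the feedforward cancels `(z_d × z̈_d) × z`, and `ż_d × ż_d = 0`). Now `v_e ⊥ z`, so
the first term pairs to zero with `v_e`; the second pairs to `k₁ (⟨ż, z_d⟩ + ⟨z, ż_d⟩)` because
`z` and `z_d` are unit vectors and `z_d ⊥ ż_d`, which cancels the potential term; and the gyroscopic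
term is `(⟨z, w⟩ z - w) × ż`, whose pairing with `v_e` is the triple product of three vectors of the
plane `z^⊥`, hence zero.
-/

open scoped InnerProductSpace

noncomputable section

open scoped Matrix
open WithLp

namespace E3

lemma cross_eq_crossProduct (a b : E3) : cross a b = toLp 2 (ofLp a ⨯₃ ofLp b) := rfl

lemma inner_eq_dotProduct (a b : E3) : ⟪a, b⟫_ℝ = ofLp a ⬝ᵥ ofLp b := by
  simp [EuclideanSpace.inner_eq_star_dotProduct, dotProduct_comm]

lemma cross_self (a : E3) : cross a a = 0 := by
  simp [cross_eq_crossProduct]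

lemma inner_cross_self (a b : E3) : ⟪b, cross a b⟫_ℝ = 0 := by
  simp [cross_eq_crossProduct, inner_eq_dotProduct]

lemma inner_cross_left (a b c : E3) : ⟪cross a b, c⟫_ℝ = ⟪a, cross b c⟫_ℝ := by
  rw [real_inner_comm, inner_eq_dotProduct, inner_eq_dotProduct]
  exact triple_product_permutation _ _ _

lemma cross_cross (a b c : E3) : cross a (cross b c) = ⟪a, c⟫_ℝ • b - ⟪a, b⟫_ℝ • c := by
  simp [cross_eq_crossProduct, inner_eq_dotProduct, cross_cross_eq_smul_sub_smul', dotProduct_comm]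

def crossL : E3 →L[ℝ] E3 →L[ℝ] E3 :=
  LinearMap.toContinuousBilinearMap <|
    LinearMap.mk₂ ℝ cross (by simp [cross_eq_crossProduct]) (by simp [cross_eq_crossProduct])
      (by simp [cross_eq_crossProduct]) (by simp [cross_eq_crossProduct])

@[simp] lemma crossL_apply (a b : E3) : crossL a b = cross a b := rfl

lemma cross_zero_right (a : E3) : cross a 0 = 0 := map_zero (crossL a)

lemma cross_sub_smul_left (r : ℝ) (a b c : E3) :
    cross (r • a - b) c = r • cross a c - cross b c := by
  simp only [← crossL_apply, map_sub, map_smul, sub_apply, smul_apply]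

lemma _root_.HasDerivAt.cross {a b : ℝ → E3} {a' b' : E3} {t : ℝ}
    (ha : HasDerivAt a a' t) (hb : HasDerivAt b b' t) :
    HasDerivAt (fun s => cross (a s) (b s)) (cross a' (b t) + cross (a t) b') t := by
  simpa [add_comm] using crossL.hasDerivAt_of_bilinear (fun _ => ha) (fun _ => hb)

variable {z : E3}

lemma eq_inner_smul_of_cross_eq_zero (hz : ‖z‖ = 1) {y : E3} (h : cross z y = 0) :
    y = ⟪z, y⟫_ℝ • z := by
  have hzz : ⟪z, z⟫_ℝ = 1 := by rw [real_inner_self_eq_norm_sq, hz, one_pow]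
  have : cross z (cross z y) = 0 := by rw [h, cross_zero_right]
  rw [cross_cross, hzz, one_smul, sub_eq_zero] at this
  exact this.symm

lemma cross_eq_inner_smul_of_inner_eq_zero (hz : ‖z‖ = 1) {a b : E3}
    (ha : ⟪z, a⟫_ℝ = 0) (hb : ⟪z, b⟫_ℝ = 0) : cross a b = ⟪z, cross a b⟫_ℝ • z :=
  eq_inner_smul_of_cross_eq_zero hz (by rw [cross_cross, ha, hb, zero_smul, zero_smul, sub_zero])

lemma inner_cross_eq_zero_of_inner_eq_zero (hz : ‖z‖ = 1) {a b c : E3}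
    (ha : ⟪z, a⟫_ℝ = 0) (hb : ⟪z, b⟫_ℝ = 0) (hc : ⟪z, c⟫_ℝ = 0) : ⟪cross a b, c⟫_ℝ = 0 := by
  rw [inner_cross_left, cross_eq_inner_smul_of_inner_eq_zero hz hb hc, real_inner_smul_right,
    real_inner_comm z a, ha, mul_zero]

lemma inner_smul_cross_sub_cross_eq_zero (hz : ‖z‖ = 1) (w : E3) {u v : E3}
    (hu : ⟪z, u⟫_ℝ = 0) (hv : ⟪z, v⟫_ℝ = 0) :
    ⟪⟪z, w⟫_ℝ • cross z u - cross w u, v⟫_ℝ = 0 := by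
  rw [← cross_sub_smul_left]
  refine inner_cross_eq_zero_of_inner_eq_zero hz ?_ hu hv
  rw [inner_sub_right, real_inner_smul_right, real_inner_self_eq_norm_sq, hz]
  ring

variable {z v zd vd : E3}

lemma inner_velocityError (hv : ⟪z, v⟫_ℝ = 0) : ⟪z, v - cross (cross zd vd) z⟫_ℝ = 0 := by
  rw [inner_sub_right, hv, inner_cross_self, sub_zero]

lemma inner_cross_cross_velocityError (hz : ‖z‖ = 1) (hzd : ‖zd‖ = 1) (hv : ⟪z, v⟫_ℝ = 0)
    (hvd : ⟪zd, vd⟫_ℝ = 0) :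
    ⟪cross z (cross z zd), v - cross (cross zd vd) z⟫_ℝ = -(⟪zd, v⟫_ℝ + ⟪z, vd⟫_ℝ) := by
  have hzd_ve : ⟪zd, cross (cross zd vd) z⟫_ℝ = -⟪z, vd⟫_ℝ := by
    rw [← inner_cross_left, cross_cross, hvd, inner_sub_left, real_inner_smul_left,
      real_inner_smul_left, real_inner_self_eq_norm_sq, hzd, real_inner_comm z vd]
    ring
  rw [cross_cross, inner_sub_left, real_inner_smul_left, real_inner_smul_left,
    inner_velocityError hv, real_inner_self_eq_norm_sq, hz, inner_sub_right, hzd_ve]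
  ring

lemma hasDerivAt_velocityError {z zd : ℝ → E3} {t : ℝ} {a ad : E3}
    (hz : HasDerivAt z (deriv z t) t) (hz' : HasDerivAt (deriv z) a t)
    (hzd : HasDerivAt zd (deriv zd t) t) (hzd' : HasDerivAt (deriv zd) ad t) :
    HasDerivAt (fun s => deriv z s - cross (cross (zd s) (deriv zd s)) (z s))
      (a - cross (cross (zd t) ad) (z t) - cross (cross (zd t) (deriv zd t)) (deriv z t)) t := by
  refine (hz'.sub ((hzd.cross hzd').cross hz)).congr_deriv ?_
  rw [cross_self, zero_add, sub_add_eq_sub_sub]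

end E3

/-- For curves z, z_d on the unit 2-sphere, with velocity error
`v_e = ż − (z_d × ż_d) × z` and feedforward
`FF = ⟨z, z_d × ż_d⟩ (z × ż) + (z_d × z̈_d) × z`, if z solves
`z̈ = −‖ż‖²z − k₁ (z × (z × z_d)) − k₂ v_e + FF − z × (z × β(t))`,
then the tracking Lyapunov function `V₂ = k₁ (1 − ⟨z, z_d⟩) + ½‖v_e‖²` satisfies
`V̇₂ = −k₂‖v_e‖² − ⟨z × (z × β(t)), v_e⟩`. -/
theorem lyapunov_derivative_tracking_with_beta
    (k₁ k₂ : ℝ) (β : ℝ → E3)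
    (z zd : ℝ → E3)
    (hz : Differentiable ℝ z) (hz' : Differentiable ℝ (deriv z))
    (hzd : Differentiable ℝ zd) (hzd' : Differentiable ℝ (deriv zd))
    (hsph : ∀ t, ‖z t‖ = 1) (hsphd : ∀ t, ‖zd t‖ = 1)
    (horth : ∀ t, ⟪z t, deriv z t⟫_ℝ = 0)
    (horthd : ∀ t, ⟪zd t, deriv zd t⟫_ℝ = 0)
    (ve : ℝ → E3)
    (hve : ∀ t, ve t = deriv z t - cross (cross (zd t) (deriv zd t)) (z t))
    (FF : ℝ → E3)
    (hFF : ∀ t, FF t = ⟪z t, cross (zd t) (deriv zd t)⟫_ℝ • cross (z t) (deriv z t) +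
      cross (cross (zd t) (deriv (deriv zd) t)) (z t))
    (heqn : ∀ t, deriv (deriv z) t =
      -(‖deriv z t‖ ^ 2 • z t) - k₁ • cross (z t) (cross (z t) (zd t)) -
        k₂ • ve t + FF t - cross (z t) (cross (z t) (β t))) :
    ∀ t, HasDerivAt (fun s => k₁ * (1 - ⟪z s, zd s⟫_ℝ) + (1 / 2) * ‖ve s‖ ^ 2)
        (-(k₂ * ‖ve t‖ ^ 2) - ⟪cross (z t) (cross (z t) (β t)), ve t⟫_ℝ) t := by
  intro t
  have hacc := heqn t
  rw [hFF t] at hacc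
  set w := cross (zd t) (deriv zd t)
  have hveD : HasDerivAt ve (deriv (deriv z) t - cross (cross (zd t) (deriv (deriv zd) t)) (z t)
      - cross w (deriv z t)) t := by
    rw [funext hve]
    exact E3.hasDerivAt_velocityError (hz t).hasDerivAt (hz' t).hasDerivAt (hzd t).hasDerivAt
      (hzd' t).hasDerivAt
  have hV := (((hasDerivAt_const t 1).sub ((hz t).hasDerivAt.inner ℝ (hzd t).hasDerivAt)).const_mul
    k₁).add (hveD.norm_sq.const_mul (1 / 2))
  refine hV.congr_deriv ?_
  set G := ⟪z t, w⟫_ℝ • cross (z t) (deriv z t) - cross w (deriv z t)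
  have hve' : deriv (deriv z) t - cross (cross (zd t) (deriv (deriv zd) t)) (z t)
      - cross w (deriv z t) =
        -(‖deriv z t‖ ^ 2 • z t) - k₁ • cross (z t) (cross (z t) (zd t)) - k₂ • ve t + G
        - cross (z t) (cross (z t) (β t)) := by
    rw [hacc]; simp only [G]; abel
  have hve_perp : ⟪z t, ve t⟫_ℝ = 0 := hve t ▸ E3.inner_velocityError (horth t)
  have hgyro : ⟪G, ve t⟫_ℝ = 0 :=
    E3.inner_smul_cross_sub_cross_eq_zero (hsph t) w (horth t) hve_perp
  have htrack :=
    hve t ▸ E3.inner_cross_cross_velocityError (hsph t) (hsphd t) (horth t) (horthd t)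
  rw [real_inner_comm] at hve_perp hgyro htrack
  rw [hve']
  simp only [inner_add_right, inner_sub_right, inner_neg_right, real_inner_smul_right,
    real_inner_self_eq_norm_sq, hve_perp, hgyro, htrack]
  rw [real_inner_comm (deriv z t) (zd t), real_inner_comm (ve t)]
  ring
end
end
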